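/- Fix A₀ ∈ ℝ^{m×n} with rank ≥ r, tolerance τ > 0, perturbations E₂,…,E_k with ε̄ = max_{2≤j≤k}‖E_j‖₂ > 0, and suppose k ≤ (τ·σ_r(A₀) / (2‖A₀‖₂·ε̄ + ε̄²))². Then the perturbed concatenation M̃ = [A₀, A₀+E₂, …, A₀+E_k] satisfies |σ_i(M̃) − √k·σ_i(A₀)| ≤ τ for all i = 1,…,r. -/

import Mathlib

open Matrix Finset

/-- Spectral (ℓ²-operator) norm of a matrix. -/
noncomputable def specNorm {m n : Type*} [Fintype m] [Fintype n] [DecidableEq n]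
    (A : Matrix m n ℝ) : ℝ :=
  ‖LinearMap.toContinuousLinearMap (Matrix.toEuclideanLin A)‖

/-- Eigenvalues of a real symmetric matrix, in nonincreasing order (0-based);
returns 0 if the matrix is not Hermitian. -/
noncomputable def eigDesc {n : ℕ} (A : Matrix (Fin n) (Fin n) ℝ) : Fin n → ℝ :=
  if hA : A.IsHermitian then
    fun i => hA.eigenvalues (Tuple.sort hA.eigenvalues i.rev)
  else fun _ => 0

/-- The `i`-th largest singular value (0-based), defined as the square root of the
`i`-th largest eigenvalue of `Aᵀ * A`; zero for out-of-range indices. -/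
noncomputable def sval {m n : ℕ} (A : Matrix (Fin m) (Fin n) ℝ) (i : ℕ) : ℝ :=
  if h : i < n then Real.sqrt (eigDesc (Aᵀ * A) ⟨i, h⟩) else 0

/-- Horizontal concatenation of `k` matrices of size `m × n`. -/
noncomputable def hconcat {m n k : ℕ} (A : Fin k → Matrix (Fin m) (Fin n) ℝ) :
    Matrix (Fin m) (Fin (k * n)) ℝ :=
  Matrix.of fun i j => A (finProdFinEquiv.symm j).1 i (finProdFinEquiv.symm j).2

/-!
By Courant–Fischer, `σᵢ(C)` is characterised through `(i+1)`-dimensional subspaces: on some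
such subspace `‖C x‖ ≥ σᵢ(C) ‖x‖`, and every such subspace contains `x ≠ 0` with
`‖C x‖ ≤ σᵢ(C) ‖x‖`. For `M̃ = [A₀ + E₁, …, A₀ + E_k]` we have
`M̃ y = A₀ (∑ⱼ yⱼ) + ∑ⱼ Eⱼ yⱼ` and `‖∑ⱼ yⱼ‖ ≤ √k ‖y‖`. Pushing a subspace for `M̃` forward by
`y ↦ ∑ⱼ yⱼ`, and pulling one for `A₀` back by `x ↦ (x, …, x)`, gives
`|σᵢ(M̃) - √k σᵢ(A₀)| ≤ √k ε̄` for every `i`. The bound on `k` makes `√k ε̄ ≤ τ`, since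
`σᵣ(A₀) ε̄ ≤ ‖A₀‖₂ ε̄ ≤ 2 ‖A₀‖₂ ε̄ + ε̄²`.
-/

open scoped RealInnerProductSpace

namespace OrthonormalBasis

variable {E : Type*} [NormedAddCommGroup E] [InnerProductSpace ℝ E] {N : ℕ}
  (b : OrthonormalBasis (Fin N) ℝ E)

lemma norm_sq_eq_sum_repr_sq (x : E) : ‖x‖ ^ 2 = ∑ j, b.repr x j ^ 2 := by
  simp_rw [b.repr_apply_apply, b.sum_sq_inner_right]

lemma repr_eq_zero_of_mem_span_image {s : Set (Fin N)} {x : E}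
    (hx : x ∈ Submodule.span ℝ (b '' s)) {j : Fin N} (hj : j ∉ s) : b.repr x j = 0 := by
  rw [← b.coe_toBasis, Module.Basis.mem_span_image] at hx
  rw [← b.coe_toBasis_repr_apply]
  exact Finsupp.notMem_support_iff.mp fun h => hj (hx h)

lemma finrank_span_image (s : Finset (Fin N)) :
    Module.finrank ℝ (Submodule.span ℝ (b '' s)) = s.card := by
  have hli : LinearIndependent ℝ fun t : (s : Set (Fin N)) => b t :=
    b.orthonormal.linearIndependent.comp _ Subtype.val_injective
  rw [Set.image_eq_range, finrank_span_eq_card hli]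
  simp

variable {b} {μ : Fin N → ℝ} {T : E →ₗ[ℝ] E}

lemma inner_apply_self_eq_sum (hT : ∀ j, T (b j) = μ j • b j) (x : E) :
    ⟪T x, x⟫ = ∑ j, μ j * b.repr x j ^ 2 := by
  nth_rw 1 [← b.sum_repr x]
  simp only [map_sum, map_smul, hT, smul_smul, sum_inner, real_inner_smul_left,
    ← b.repr_apply_apply]
  exact Finset.sum_congr rfl fun j _ => by ring

lemma inner_apply_self_le_of_mem_span (hT : ∀ j, T (b j) = μ j • b j) {s : Set (Fin N)} {c : ℝ}
    (hs : ∀ j ∈ s, μ j ≤ c) {x : E} (hx : x ∈ Submodule.span ℝ (b '' s)) :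
    ⟪T x, x⟫ ≤ c * ‖x‖ ^ 2 := by
  rw [inner_apply_self_eq_sum hT, b.norm_sq_eq_sum_repr_sq, Finset.mul_sum]
  refine Finset.sum_le_sum fun j _ => ?_
  by_cases hj : j ∈ s
  · exact mul_le_mul_of_nonneg_right (hs j hj) (sq_nonneg _)
  · simp [b.repr_eq_zero_of_mem_span_image hx hj]

lemma le_inner_apply_self_of_mem_span (hT : ∀ j, T (b j) = μ j • b j) {s : Set (Fin N)} {c : ℝ}
    (hs : ∀ j ∈ s, c ≤ μ j) {x : E} (hx : x ∈ Submodule.span ℝ (b '' s)) :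
    c * ‖x‖ ^ 2 ≤ ⟪T x, x⟫ := by
  have h := inner_apply_self_le_of_mem_span (T := -T) (μ := -μ) (c := -c)
    (fun j => by simp [hT]) (fun j hj => neg_le_neg (hs j hj)) hx
  simpa [inner_neg_left] using h

lemma exists_finrank_eq_forall_mul_norm_sq_le_inner (hμ : Antitone μ)
    (hT : ∀ j, T (b j) = μ j • b j) (i : Fin N) :
    ∃ S : Submodule ℝ E, Module.finrank ℝ S = i + 1 ∧ ∀ x ∈ S, μ i * ‖x‖ ^ 2 ≤ ⟪T x, x⟫ := by
  refine ⟨Submodule.span ℝ (b '' (Finset.Iic i : Finset (Fin N))), ?_, fun x hx => ?_⟩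
  · rw [b.finrank_span_image, Fin.card_Iic]
  · exact le_inner_apply_self_of_mem_span hT (fun j hj => hμ (Finset.mem_Iic.mp hj)) hx

lemma exists_mem_ne_zero_inner_le_mul_norm_sq (hμ : Antitone μ)
    (hT : ∀ j, T (b j) = μ j • b j) (i : Fin N) {S : Submodule ℝ E}
    (hS : Module.finrank ℝ S = i + 1) :
    ∃ x ∈ S, x ≠ 0 ∧ ⟪T x, x⟫ ≤ μ i * ‖x‖ ^ 2 := by
  have : FiniteDimensional ℝ E := b.toBasis.finiteDimensional_of_finite
  set B := Submodule.span ℝ (b '' (Finset.Ici i : Finset (Fin N)))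
  have hB : Module.finrank ℝ B = N - i := by rw [b.finrank_span_image, Fin.card_Ici]
  have hSB : 0 < Module.finrank ℝ ↥(S ⊓ B) := by
    have hsup : Module.finrank ℝ ↥(S ⊔ B) ≤ N := by
      simpa [Module.finrank_eq_card_basis b.toBasis] using Submodule.finrank_le (S ⊔ B)
    have := Submodule.finrank_sup_add_finrank_inf_eq S B
    omega
  obtain ⟨⟨x, hxS, hxB⟩, hx⟩ := Module.finrank_pos_iff_exists_ne_zero.mp hSB
  exact ⟨x, hxS, fun h => hx (Subtype.ext h),
    inner_apply_self_le_of_mem_span hT (fun j hj => hμ (Finset.mem_Ici.mp hj)) hxB⟩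

end OrthonormalBasis

section Eigenvalues

variable {N : ℕ} {A : Matrix (Fin N) (Fin N) ℝ}

lemma eigDesc_eq_eigenvalues (hA : A.IsHermitian) (i : Fin N) :
    eigDesc A i = hA.eigenvalues (Tuple.sort hA.eigenvalues i.rev) := by
  rw [eigDesc, dif_pos hA]

lemma eigDesc_antitone (hA : A.IsHermitian) : Antitone (eigDesc A) := fun i j hij => by
  simp only [eigDesc_eq_eigenvalues hA]
  exact Tuple.monotone_sort hA.eigenvalues (Fin.rev_le_rev.mpr hij)

noncomputable def Matrix.IsHermitian.eigDescBasis (hA : A.IsHermitian) :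
    OrthonormalBasis (Fin N) ℝ (EuclideanSpace ℝ (Fin N)) :=
  hA.eigenvectorBasis.reindex (Fin.revPerm.trans (Tuple.sort hA.eigenvalues)).symm

lemma toEuclideanLin_eigDescBasis (hA : A.IsHermitian) (j : Fin N) :
    toEuclideanLin A (hA.eigDescBasis j) = eigDesc A j • hA.eigDescBasis j := by
  rw [eigDesc_eq_eigenvalues hA, Matrix.IsHermitian.eigDescBasis, OrthonormalBasis.reindex_apply]
  ext l
  simpa using congrFun (hA.mulVec_eigenvectorBasis _) l

end Eigenvalues

section SingularValues

variable {p q : ℕ} (C : Matrix (Fin p) (Fin q) ℝ)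

lemma specNorm_nonneg : 0 ≤ specNorm C := norm_nonneg _

lemma norm_toEuclideanLin_apply_le (x : EuclideanSpace ℝ (Fin q)) :
    ‖toEuclideanLin C x‖ ≤ specNorm C * ‖x‖ :=
  (LinearMap.toContinuousLinearMap (toEuclideanLin C)).le_opNorm x

lemma inner_toEuclideanLin_transpose_mul_self (x : EuclideanSpace ℝ (Fin q)) :
    ⟪toEuclideanLin (Cᵀ * C) x, x⟫ = ‖toEuclideanLin C x‖ ^ 2 := by
  have : toEuclideanLin (Cᵀ * C) x = (toEuclideanLin C).adjoint (toEuclideanLin C x) := by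
    rw [← toEuclideanLin_conjTranspose_eq_adjoint, conjTranspose_eq_transpose_of_trivial]
    simp
  rw [this, LinearMap.adjoint_inner_left, real_inner_self_eq_norm_sq]

lemma isHermitian_transpose_mul_self : (Cᵀ * C).IsHermitian := by
  simpa [conjTranspose_eq_transpose_of_trivial] using isHermitian_conjTranspose_mul_self C

lemma sval_nonneg (i : ℕ) : 0 ≤ sval C i := by
  unfold sval; split_ifs <;> positivity

lemma sval_of_lt {i : ℕ} (hi : i < q) : sval C i = √(eigDesc (Cᵀ * C) ⟨i, hi⟩) := dif_pos hi

lemma exists_finrank_eq_forall_sval_mul_norm_le {i : ℕ} (hi : i < q) :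
    ∃ S : Submodule ℝ (EuclideanSpace ℝ (Fin q)), Module.finrank ℝ S = i + 1 ∧
      ∀ x ∈ S, sval C i * ‖x‖ ≤ ‖toEuclideanLin C x‖ := by
  have hG := isHermitian_transpose_mul_self C
  obtain ⟨S, hS, hle⟩ := OrthonormalBasis.exists_finrank_eq_forall_mul_norm_sq_le_inner
    (eigDesc_antitone hG) (toEuclideanLin_eigDescBasis hG) ⟨i, hi⟩
  refine ⟨S, hS, fun x hx => ?_⟩
  have h := Real.sqrt_le_sqrt (hle x hx)
  rwa [inner_toEuclideanLin_transpose_mul_self, Real.sqrt_mul' _ (sq_nonneg _),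
    Real.sqrt_sq (norm_nonneg _), Real.sqrt_sq (norm_nonneg _), ← sval_of_lt C hi] at h

lemma exists_mem_ne_zero_norm_le_sval_mul {i : ℕ} {S : Submodule ℝ (EuclideanSpace ℝ (Fin q))}
    (hS : Module.finrank ℝ S = i + 1) :
    ∃ x ∈ S, x ≠ 0 ∧ ‖toEuclideanLin C x‖ ≤ sval C i * ‖x‖ := by
  have hi : i < q := by
    have := Submodule.finrank_le S
    rw [finrank_euclideanSpace_fin] at this
    omega
  have hG := isHermitian_transpose_mul_self C
  obtain ⟨x, hxS, hx0, hle⟩ := OrthonormalBasis.exists_mem_ne_zero_inner_le_mul_norm_sq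
    (eigDesc_antitone hG) (toEuclideanLin_eigDescBasis hG) ⟨i, hi⟩ hS
  refine ⟨x, hxS, hx0, ?_⟩
  have h := Real.sqrt_le_sqrt hle
  rwa [inner_toEuclideanLin_transpose_mul_self, Real.sqrt_mul' _ (sq_nonneg _),
    Real.sqrt_sq (norm_nonneg _), Real.sqrt_sq (norm_nonneg _), ← sval_of_lt C hi] at h

lemma exists_mem_ne_zero_norm_comp_le_sval_mul {V : Type*} [AddCommGroup V] [Module ℝ V]
    (f : V →ₗ[ℝ] EuclideanSpace ℝ (Fin q)) {i : ℕ} {S : Submodule ℝ V}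
    (hS : Module.finrank ℝ S = i + 1) :
    ∃ y ∈ S, y ≠ 0 ∧ ‖toEuclideanLin C (f y)‖ ≤ sval C i * ‖f y‖ := by
  have : FiniteDimensional ℝ S := Module.finite_of_finrank_pos (R := ℝ) (M := S) (by omega)
  by_cases hker : LinearMap.ker (f.domRestrict S) = ⊥
  · have hrange : Module.finrank ℝ (S.map f) = i + 1 := by
      rw [← LinearMap.range_domRestrict, ← hS,
        ← LinearMap.finrank_range_add_finrank_ker (f.domRestrict S), hker, finrank_bot, add_zero]
    obtain ⟨x, hx, hx0, hle⟩ := exists_mem_ne_zero_norm_le_sval_mul C hrange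
    obtain ⟨y, hy, rfl⟩ := Submodule.mem_map.mp hx
    exact ⟨y, hy, by rintro rfl; exact hx0 (map_zero f), hle⟩
  · obtain ⟨⟨y, hy⟩, hfy, hy0⟩ := (Submodule.ne_bot_iff _).mp hker
    have hfy : f y = 0 := by simpa using hfy
    refine ⟨y, hy, fun h => hy0 (Subtype.ext h), ?_⟩
    simp [hfy]

lemma sval_le_specNorm (i : ℕ) : sval C i ≤ specNorm C := by
  by_cases hi : i < q
  · obtain ⟨S, hS, hle⟩ := exists_finrank_eq_forall_sval_mul_norm_le C hi
    have hpos : 0 < Module.finrank ℝ S := by omega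
    obtain ⟨⟨x, hx⟩, hx0⟩ := Module.finrank_pos_iff_exists_ne_zero.mp hpos
    replace hx0 : x ≠ 0 := fun h => hx0 (Subtype.ext h)
    exact le_of_mul_le_mul_right ((hle x hx).trans (norm_toEuclideanLin_apply_le C x))
      (norm_pos_iff.mpr hx0)
  · rw [sval, dif_neg hi]
    exact specNorm_nonneg C

end SingularValues

noncomputable def EuclideanSpace.comap {ι κ : Type*} (f : κ → ι) :
    EuclideanSpace ℝ ι →ₗ[ℝ] EuclideanSpace ℝ κ :=
  (WithLp.linearEquiv 2 ℝ (κ → ℝ)).symm.toLinearMap ∘ₗ LinearMap.funLeft ℝ ℝ f ∘ₗ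
    (WithLp.linearEquiv 2 ℝ (ι → ℝ)).toLinearMap

@[simp]
lemma EuclideanSpace.comap_apply {ι κ : Type*} (f : κ → ι) (y : EuclideanSpace ℝ ι) (j : κ) :
    EuclideanSpace.comap f y j = y (f j) := rfl

section Blocks

variable {m n k : ℕ}

noncomputable def vecBlock (j : Fin k) :
    EuclideanSpace ℝ (Fin (k * n)) →ₗ[ℝ] EuclideanSpace ℝ (Fin n) :=
  EuclideanSpace.comap fun l => finProdFinEquiv (j, l)

noncomputable def vecReplicate : EuclideanSpace ℝ (Fin n) →ₗ[ℝ] EuclideanSpace ℝ (Fin (k * n)) :=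
  EuclideanSpace.comap fun p => (finProdFinEquiv.symm p).2

@[simp]
lemma vecBlock_vecReplicate (x : EuclideanSpace ℝ (Fin n)) (j : Fin k) :
    vecBlock j (vecReplicate x) = x := by
  ext l
  simp only [vecBlock, vecReplicate, EuclideanSpace.comap_apply, Equiv.symm_apply_apply]

lemma norm_sq_eq_sum_norm_vecBlock_sq (y : EuclideanSpace ℝ (Fin (k * n))) :
    ‖y‖ ^ 2 = ∑ j, ‖vecBlock j y‖ ^ 2 := by
  simp only [EuclideanSpace.real_norm_sq_eq, vecBlock, EuclideanSpace.comap_apply]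
  rw [← finProdFinEquiv.sum_comp, Fintype.sum_prod_type]

lemma sum_norm_vecBlock_le (y : EuclideanSpace ℝ (Fin (k * n))) :
    ∑ j, ‖vecBlock j y‖ ≤ √k * ‖y‖ := by
  rw [← Real.sqrt_sq (norm_nonneg y), ← Real.sqrt_mul k.cast_nonneg,
    norm_sq_eq_sum_norm_vecBlock_sq]
  refine (le_abs_self _).trans (Real.abs_le_sqrt ?_)
  simpa using sq_sum_le_card_mul_sum_sq (s := Finset.univ) (f := fun j => ‖vecBlock j y‖)

lemma norm_vecReplicate (x : EuclideanSpace ℝ (Fin n)) :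
    ‖(vecReplicate x : EuclideanSpace ℝ (Fin (k * n)))‖ = √k * ‖x‖ := by
  have hsq : ‖(vecReplicate x : EuclideanSpace ℝ (Fin (k * n)))‖ ^ 2 = k * ‖x‖ ^ 2 := by
    simp [norm_sq_eq_sum_norm_vecBlock_sq]
  rw [← Real.sqrt_sq (norm_nonneg (vecReplicate x)), hsq, Real.sqrt_mul k.cast_nonneg,
    Real.sqrt_sq (norm_nonneg x)]

lemma toEuclideanLin_hconcat (B : Fin k → Matrix (Fin m) (Fin n) ℝ)
    (y : EuclideanSpace ℝ (Fin (k * n))) :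
    toEuclideanLin (hconcat B) y = ∑ j, toEuclideanLin (B j) (vecBlock j y) := by
  ext i
  simp only [toLpLin_apply, hconcat, vecBlock, mulVec, dotProduct, of_apply, WithLp.ofLp_sum,
    Finset.sum_apply, EuclideanSpace.comap_apply]
  rw [← finProdFinEquiv.sum_comp, Fintype.sum_prod_type]
  simp

end Blocks

section Perturbation

variable {m n k : ℕ} (A : Matrix (Fin m) (Fin n) ℝ) {E : Fin k → Matrix (Fin m) (Fin n) ℝ}
  {ε : ℝ}

lemma norm_sum_toEuclideanLin_le (hE : ∀ j, specNorm (E j) ≤ ε)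
    (v : Fin k → EuclideanSpace ℝ (Fin n)) :
    ‖∑ j, toEuclideanLin (E j) (v j)‖ ≤ ε * ∑ j, ‖v j‖ := by
  rw [Finset.mul_sum]
  refine (norm_sum_le _ _).trans (Finset.sum_le_sum fun j _ => ?_)
  exact (norm_toEuclideanLin_apply_le _ _).trans
    (mul_le_mul_of_nonneg_right (hE j) (norm_nonneg _))

lemma toEuclideanLin_hconcat_add (y : EuclideanSpace ℝ (Fin (k * n))) :
    toEuclideanLin (hconcat fun j => A + E j) y =
      toEuclideanLin A (∑ j, vecBlock j y) + ∑ j, toEuclideanLin (E j) (vecBlock j y) := by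
  simp only [toEuclideanLin_hconcat, map_add, LinearMap.add_apply, map_sum,
    Finset.sum_add_distrib]

lemma sval_hconcat_add_le (hε : 0 ≤ ε) (hE : ∀ j, specNorm (E j) ≤ ε) (i : ℕ) :
    sval (hconcat fun j => A + E j) i ≤ √k * (sval A i + ε) := by
  set M := hconcat fun j => A + E j
  by_cases hi : i < k * n
  swap
  · rw [sval, dif_neg hi]
    have := sval_nonneg A i
    positivity
  obtain ⟨S, hS, hM⟩ := exists_finrank_eq_forall_sval_mul_norm_le M hi
  obtain ⟨y, hyS, hy0, hA⟩ := exists_mem_ne_zero_norm_comp_le_sval_mul A (∑ j, vecBlock j) hS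
  rw [LinearMap.sum_apply] at hA
  have hsum : ‖∑ j, vecBlock j y‖ ≤ √k * ‖y‖ :=
    (norm_sum_le _ _).trans (sum_norm_vecBlock_le y)
  have hbound : sval M i * ‖y‖ ≤ √k * (sval A i + ε) * ‖y‖ :=
    calc sval M i * ‖y‖ ≤ ‖toEuclideanLin M y‖ := hM y hyS
      _ ≤ sval A i * ‖∑ j, vecBlock j y‖ + ε * ∑ j, ‖vecBlock j y‖ := by
        rw [toEuclideanLin_hconcat_add]
        exact (norm_add_le _ _).trans (add_le_add hA (norm_sum_toEuclideanLin_le hE _))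
      _ ≤ sval A i * (√k * ‖y‖) + ε * (√k * ‖y‖) :=
        add_le_add (mul_le_mul_of_nonneg_left hsum (sval_nonneg A i))
          (mul_le_mul_of_nonneg_left (sum_norm_vecBlock_le y) hε)
      _ = √k * (sval A i + ε) * ‖y‖ := by ring
  exact le_of_mul_le_mul_right hbound (norm_pos_iff.mpr hy0)

lemma sqrt_mul_sub_le_sval_hconcat_add (hε : 0 ≤ ε) (hE : ∀ j, specNorm (E j) ≤ ε) (i : ℕ) :
    √k * (sval A i - ε) ≤ sval (hconcat fun j => A + E j) i := by
  set M := hconcat fun j => A + E j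
  by_cases hi : i < n
  swap
  · rw [sval, dif_neg hi]
    nlinarith [Real.sqrt_nonneg k, sval_nonneg M i]
  obtain ⟨S, hS, hA⟩ := exists_finrank_eq_forall_sval_mul_norm_le A hi
  obtain ⟨x, hxS, hx0, hM⟩ := exists_mem_ne_zero_norm_comp_le_sval_mul M vecReplicate hS
  have hMx : toEuclideanLin M (vecReplicate x) =
      (k : ℝ) • toEuclideanLin A x + ∑ j, toEuclideanLin (E j) x := by
    simp [M, toEuclideanLin_hconcat_add, Nat.cast_smul_eq_nsmul]
  have hbound : √k * (√k * (sval A i - ε)) * ‖x‖ ≤ √k * sval M i * ‖x‖ :=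
    calc √k * (√k * (sval A i - ε)) * ‖x‖ = k * (sval A i * ‖x‖) - ε * ∑ _j : Fin k, ‖x‖ := by
          simp only [Finset.sum_const, Finset.card_univ, Fintype.card_fin, nsmul_eq_mul]
          rw [← mul_assoc, Real.mul_self_sqrt k.cast_nonneg]
          ring
      _ ≤ ‖(k : ℝ) • toEuclideanLin A x‖ - ‖∑ j, toEuclideanLin (E j) x‖ := by
        rw [norm_smul, Real.norm_natCast]
        gcongr
        · exact hA x hxS
        · exact norm_sum_toEuclideanLin_le hE fun _ => x
      _ ≤ ‖toEuclideanLin M (vecReplicate x)‖ := by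
        rw [hMx]
        exact norm_sub_le_norm_add _ _
      _ ≤ √k * sval M i * ‖x‖ := by
        rw [mul_comm √k, mul_assoc, ← norm_vecReplicate]
        exact hM
  rcases k.eq_zero_or_pos with rfl | hk
  · simpa using sval_nonneg M i
  exact le_of_mul_le_mul_left (le_of_mul_le_mul_right hbound (norm_pos_iff.mpr hx0))
    (Real.sqrt_pos.mpr (Nat.cast_pos.mpr hk))

theorem abs_sval_hconcat_add_sub_le (hε : 0 ≤ ε) (hE : ∀ j, specNorm (E j) ≤ ε) (i : ℕ) :
    |sval (hconcat fun j => A + E j) i - √k * sval A i| ≤ √k * ε := by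
  have hupper := sval_hconcat_add_le A hε hE i
  have hlower := sqrt_mul_sub_le_sval_hconcat_add A hε hE i
  rw [mul_add] at hupper
  rw [mul_sub] at hlower
  exact abs_sub_le_iff.mpr ⟨by linarith, by linarith⟩

end Perturbation

theorem stmt14 {m n k : ℕ} (hk : 2 ≤ k) (A₀ : Matrix (Fin m) (Fin n) ℝ)
    (E : Fin k → Matrix (Fin m) (Fin n) ℝ) (hE0 : E ⟨0, by omega⟩ = 0)
    (r : ℕ) (τ : ℝ) (hτ : 0 < τ)
    (ebar : ℝ) (hebar : 0 < ebar)
    (hub : ∀ j ∈ Finset.univ.erase (⟨0, by omega⟩ : Fin k), specNorm (E j) ≤ ebar)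
    (hkmax : (k : ℝ) ≤ (τ * sval A₀ (r - 1) / (2 * specNorm A₀ * ebar + ebar ^ 2)) ^ 2) :
    ∀ i < r, |sval (hconcat fun j => A₀ + E j) i - Real.sqrt k * sval A₀ i| ≤ τ := by
  intro i _
  have hE : ∀ j, specNorm (E j) ≤ ebar := by
    intro j
    by_cases hj : j = ⟨0, by omega⟩
    · simpa [hj, hE0, specNorm] using hebar.le
    · exact hub j (Finset.mem_erase.mpr ⟨hj, Finset.mem_univ j⟩)
  refine (abs_sval_hconcat_add_sub_le A₀ hebar.le hE i).trans ?_
  set σ := sval A₀ (r - 1)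
  set δ := 2 * specNorm A₀ * ebar + ebar ^ 2
  have hσ : σ ≤ specNorm A₀ := sval_le_specNorm A₀ (r - 1)
  have hδ : 0 < δ := by have := specNorm_nonneg A₀; positivity
  have hσδ : σ * ebar / δ ≤ 1 := (div_le_one hδ).mpr (by nlinarith [sval_nonneg A₀ (r - 1)])
  have hsqrtk : √k ≤ τ * σ / δ := by
    have := sval_nonneg A₀ (r - 1)
    rw [← Real.sqrt_sq (by positivity : 0 ≤ τ * σ / δ)]
    exact Real.sqrt_le_sqrt hkmax
  calc √k * ebar ≤ τ * σ / δ * ebar := mul_le_mul_of_nonneg_right hsqrtk hebar.le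
    _ = τ * (σ * ebar / δ) := by ring
    _ ≤ τ := mul_le_of_le_one_right hτ.le hσδ
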